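/- arXiv:2504.02282 — 8 statements merged into one kernel-verified Lean document; each statement's English description precedes it below -/
import Mathlib

section
/- Let a ∈ ℂ and let X(s) = (z(s), a·z(s) + 1/z(s)) be a curve on the surface DC_a, where z(s) is a smooth arclength-parametrized curve in ℂ \ {0}. Then the coefficients of the wedge product X′(s) ∧ X″(s) ∈ Λ²ℝ⁴ satisfy (X′∧X″)₂₃ + (X′∧X″)₁₄ = 2·Im(z′(s)³/z(s)³) and (X′∧X″)₁₃ − (X′∧X″)₂₄ = 2·Re(z′(s)³/z(s)³); in particular X′(s) ∧ X″(s) ≠ 0 for all s. -/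
/-- Identify `ℂ × ℂ` with `ℝ⁴` via `(z,w) ↦ (Re z, Im z, Re w, Im w)`. -/
noncomputable def toR4 (p : ℂ × ℂ) : Fin 4 → ℝ := ![p.1.re, p.1.im, p.2.re, p.2.im]

/-- The coefficient of `Eⱼ ∧ E_k` in `v ∧ w`. -/
def wedgeCoef (v w : Fin 4 → ℝ) (j k : Fin 4) : ℝ := v j * w k - v k * w j

/-- For the curve `X(s) = (z(s), a z(s) + 1/z(s))` on `DC_a`, with `z` an
arclength-type parametrization (`z'(s) ≠ 0`, here `z'(s) = (X'(s)).1`), the wedge product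
`X'(s) ∧ X''(s)` satisfies `(X'∧X'')₂₃ + (X'∧X'')₁₄ = 2 Im(z'³/z³)`,
`(X'∧X'')₁₃ − (X'∧X'')₂₄ = 2 Re(z'³/z³)`; in particular `X'(s) ∧ X''(s) ≠ 0`.
(Indices are 1-based in the paper; here `0,1,2,3`.) -/
theorem stmt1 (a : ℂ) (z : ℝ → ℂ) (X' X'' : ℝ → ℂ × ℂ)
    (hz : ∀ s, z s ≠ 0)
    (hX' : ∀ s, HasDerivAt (fun s => ((z s, a * z s + 1 / z s) : ℂ × ℂ)) (X' s) s)
    (hX'' : ∀ s, HasDerivAt X' (X'' s) s)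
    (harc : ∀ s, (X' s).1 ≠ 0) :
    ∀ s : ℝ,
      (wedgeCoef (toR4 (X' s)) (toR4 (X'' s)) 1 2
          + wedgeCoef (toR4 (X' s)) (toR4 (X'' s)) 0 3
        = 2 * (((X' s).1)^3 / (z s)^3).im) ∧
      (wedgeCoef (toR4 (X' s)) (toR4 (X'' s)) 0 2
          - wedgeCoef (toR4 (X' s)) (toR4 (X'' s)) 1 3
        = 2 * (((X' s).1)^3 / (z s)^3).re) ∧
      ∃ j k : Fin 4, wedgeCoef (toR4 (X' s)) (toR4 (X'' s)) j k ≠ 0 := by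
  intro s
  have hz' : ∀ t, HasDerivAt z ((X' t).1) t := fun t => (hX' t).fst
  have key : ∀ t, (X' t).2 = a * (X' t).1 - (X' t).1 / (z t) ^ 2 := by
    intro t
    have hinv : HasDerivAt (fun r => (z r)⁻¹) ((X' t).1 • -((z t) ^ 2)⁻¹) t :=
      (hasDerivAt_inv (hz t)).scomp t (hz' t)
    have h1 : HasDerivAt (fun r => a * z r + 1 / z r)
        (a * (X' t).1 + (X' t).1 • -((z t) ^ 2)⁻¹) t := by
      have h3 : HasDerivAt (fun r => a * z r + (z r)⁻¹)
          (a * (X' t).1 + (X' t).1 • -((z t) ^ 2)⁻¹) t := ((hz' t).const_mul a).add hinv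
      simpa [one_div] using h3
    have h2 : HasDerivAt (fun r => a * z r + 1 / z r) ((X' t).2) t := (hX' t).snd
    rw [h2.unique h1, smul_eq_mul]
    ring
  set w := (X' s).1 with hw
  set u := (X'' s).1 with hu
  have hu' : HasDerivAt (fun t => (X' t).1) u s := (hX'' s).fst
  have h2'' : HasDerivAt (fun t => (X' t).2) ((X'' s).2) s := (hX'' s).snd
  have hden : (z s) ^ 2 ≠ 0 := pow_ne_zero _ (hz s)
  have hzz : HasDerivAt (fun t => (z t) ^ 2) (2 * z s * w) s := by
    have h : HasDerivAt (fun t => z t * z t) ((X' s).1 * z s + z s * (X' s).1) s :=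
      (hz' s).mul (hz' s)
    have h2 : HasDerivAt (fun t => z t * z t) (2 * z s * w) s := by
      convert h using 1; rw [← hw]; ring
    simpa [pow_two] using h2
  have halt : HasDerivAt (fun t => a * (X' t).1 - (X' t).1 / (z t) ^ 2)
      (a * u - (u * (z s) ^ 2 - w * (2 * z s * w)) / ((z s) ^ 2) ^ 2) s :=
    (hu'.const_mul a).sub (hu'.div hzz hden)
  have keyfun : (fun t => (X' t).2) = fun t => a * (X' t).1 - (X' t).1 / (z t) ^ 2 :=
    funext key
  rw [keyfun] at h2''
  have hsnd : (X'' s).2 = a * u - (u * (z s) ^ 2 - w * (2 * z s * w)) / ((z s) ^ 2) ^ 2 :=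
    h2''.unique halt
  have hD : w * (X'' s).2 - (X' s).2 * u = 2 * (w ^ 3 / (z s) ^ 3) := by
    rw [hsnd, key s, ← hw]
    field_simp [hz s]
    ring
  have h1 := congrArg Complex.im hD
  have h2 := congrArg Complex.re hD
  simp only [Complex.sub_im, Complex.mul_im, Complex.sub_re, Complex.mul_re,
    Complex.re_ofNat, Complex.im_ofNat] at h1 h2
  refine ⟨?_, ?_, ?_⟩
  · simp only [wedgeCoef, toR4, Matrix.cons_val_zero, Matrix.cons_val_one, Matrix.head_cons,
      Matrix.cons_val_two, Matrix.tail_cons, Matrix.cons_val_three]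
    linarith
  · simp only [wedgeCoef, toR4, Matrix.cons_val_zero, Matrix.cons_val_one, Matrix.head_cons,
      Matrix.cons_val_two, Matrix.tail_cons, Matrix.cons_val_three]
    linarith
  · by_contra h
    push_neg at h
    have e12 := h 1 2
    have e03 := h 0 3
    have e02 := h 0 2
    have e13 := h 1 3
    simp only [wedgeCoef, toR4, Matrix.cons_val_zero, Matrix.cons_val_one, Matrix.head_cons,
      Matrix.cons_val_two, Matrix.tail_cons, Matrix.cons_val_three] at e12 e03 e02 e13
    have hDne : w * (X'' s).2 - (X' s).2 * u ≠ 0 := by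
      rw [hD]
      exact mul_ne_zero two_ne_zero
        (div_ne_zero (pow_ne_zero _ (harc s)) (pow_ne_zero _ (hz s)))
    apply hDne
    apply Complex.ext
    · simp only [Complex.sub_re, Complex.mul_re, Complex.zero_re]
      linarith
    · simp only [Complex.sub_im, Complex.mul_im, Complex.zero_im]
      linarith
end

section
/- If z : ℝ → ℂ \ {0} is a smooth simple closed curve (periodic, injective on a period) with z′(s) ≠ 0 for all s, and the ratio z′(s)/z(s) takes values in a fixed real line through the origin in ℂ for all s, then that line is the imaginary axis, i.e. Re(z′(s)/z(s)) = 0 for all s; consequently |z(s)| is constant. -/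
/-- If `z : ℝ → ℂ \ {0}` is a smooth simple closed curve (periodic with period
`L > 0`, injective on a period) with `z'(s) ≠ 0`, and `z'(s)/z(s)` takes values in a fixed
real line `{t e^{iφ} : t ∈ ℝ}` through the origin, then `Re(z'(s)/z(s)) = 0` for all `s`
(the line is the imaginary axis); consequently `|z(s)|` is constant. -/
theorem stmt2 (z z' : ℝ → ℂ) (L : ℝ) (hL : 0 < L)
    (hper : Function.Periodic z L)
    (hinj : Set.InjOn z (Set.Ico 0 L))
    (hz : ∀ s, z s ≠ 0)
    (hz' : ∀ s, HasDerivAt z (z' s) s)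
    (hz'0 : ∀ s, z' s ≠ 0)
    (hcont : Continuous z')
    (hline : ∃ φ : ℝ, ∀ s, ∃ t : ℝ, z' s / z s = (t : ℂ) * Complex.exp ((φ : ℂ) * Complex.I)) :
    (∀ s, (z' s / z s).re = 0) ∧ ∀ s t, ‖z s‖ = ‖z t‖ := by
  obtain ⟨φ, hφ⟩ := hline
  set e : ℂ := Complex.exp ((φ : ℂ) * Complex.I) with he
  set t : ℝ → ℝ := fun s => ((z' s / z s) * Complex.exp (-((φ : ℂ) * Complex.I))).re with ht
  have key : ∀ s, z' s / z s = (t s : ℂ) * e := by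
    intro s
    obtain ⟨t0, h0⟩ := hφ s
    have h1 : (z' s / z s) * Complex.exp (-((φ : ℂ) * Complex.I)) = (t0 : ℂ) := by
      rw [h0, mul_assoc, ← Complex.exp_add]
      simp
    have h2 : t s = t0 := by
      show ((z' s / z s) * Complex.exp (-((φ : ℂ) * Complex.I))).re = t0
      rw [h1, Complex.ofReal_re]
    rw [h2, ← h0]
  have hzc : Continuous z := by
    have : Differentiable ℝ z := fun s => (hz' s).differentiableAt
    exact this.continuous
  have htc : Continuous t := by
    apply Complex.continuous_re.comp
    exact (hcont.div hzc hz).mul continuous_const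
  have htne : ∀ s, t s ≠ 0 := by
    intro s h
    have : z' s / z s = 0 := by rw [key s, h]; simp
    rw [div_eq_zero_iff] at this
    rcases this with h | h
    · exact hz'0 s h
    · exact hz s h
  -- sign of t is constant
  have hsign : (∀ s, 0 < t s) ∨ (∀ s, t s < 0) := by
    by_contra hc
    push_neg at hc
    obtain ⟨⟨a, ha⟩, b, hb⟩ := hc
    have ha' : t a < 0 := lt_of_le_of_ne ha (htne a)
    have hb' : 0 < t b := lt_of_le_of_ne hb (Ne.symm (htne b))
    have : (0 : ℝ) ∈ Set.uIcc (t a) (t b) := by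
      rw [Set.mem_uIcc]; left; exact ⟨le_of_lt ha', le_of_lt hb'⟩
    obtain ⟨c, _, hc0⟩ := intermediate_value_uIcc (htc.continuousOn) this
    exact htne c hc0
  have hre_eq : ∀ s, (z' s / z s).re = t s * Real.cos φ := by
    intro s
    rw [key s]
    simp [he, Complex.mul_re, Complex.exp_ofReal_mul_I_re]
  -- derivative of normSq ∘ z
  have hr : ∀ s, HasDerivAt (fun u => Complex.normSq (z u))
      (2 * (t s * Real.cos φ) * Complex.normSq (z s)) s := by
    intro s
    have hc : HasDerivAt (fun u => (starRingEnd ℂ) (z u)) ((starRingEnd ℂ) (z' s)) s :=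
      (hz' s).star
    have hm := (hz' s).mul hc
    have hre := Complex.reCLM.hasFDerivAt.comp_hasDerivAt s hm
    have hre' : HasDerivAt (fun u => Complex.normSq (z u))
        (Complex.reCLM (z' s * (starRingEnd ℂ) (z s) + z s * (starRingEnd ℂ) (z' s))) s :=
      hre.congr_of_eventuallyEq (Filter.Eventually.of_forall fun u => by
        simp [Function.comp, Complex.mul_conj])
    convert hre' using 1
    have h1 : z' s * (starRingEnd ℂ) (z s) = (z' s / z s) * (Complex.normSq (z s) : ℂ) := by
      rw [← Complex.mul_conj, div_mul_eq_mul_div, eq_div_iff (hz s)]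
      ring
    have h2 : z s * (starRingEnd ℂ) (z' s) = (starRingEnd ℂ) (z' s * (starRingEnd ℂ) (z s)) := by
      rw [map_mul, Complex.conj_conj]; ring
    rw [Complex.reCLM_apply, Complex.add_re, h2, Complex.conj_re, h1, Complex.mul_re]
    simp [hre_eq s]
    ring
  -- cos φ = 0
  have hcos : Real.cos φ = 0 := by
    by_contra hcos
    have hr0L : Complex.normSq (z 0) = Complex.normSq (z L) := by
      rw [show z L = z (0 + L) by ring_nf, hper 0]
    have hpos : ∀ s, 0 < Complex.normSq (z s) := fun s => Complex.normSq_pos.2 (hz s)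
    have hmono : StrictMono (fun u => Complex.normSq (z u)) ∨
        StrictAnti (fun u => Complex.normSq (z u)) := by
      rcases hsign with h | h
      · rcases lt_or_gt_of_ne hcos with hc | hc
        · right
          apply strictAnti_of_deriv_neg
          intro x
          rw [(hr x).deriv]
          have := mul_neg_of_pos_of_neg (h x) hc
          nlinarith [hpos x]
        · left
          apply strictMono_of_deriv_pos
          intro x
          rw [(hr x).deriv]
          nlinarith [hpos x, mul_pos (h x) hc]
      · rcases lt_or_gt_of_ne hcos with hc | hc
        · left
          apply strictMono_of_deriv_pos
          intro x
          rw [(hr x).deriv]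
          nlinarith [hpos x, mul_pos_of_neg_of_neg (h x) hc]
        · right
          apply strictAnti_of_deriv_neg
          intro x
          rw [(hr x).deriv]
          have := mul_neg_of_neg_of_pos (h x) hc
          nlinarith [hpos x]
    rcases hmono with h | h
    · exact absurd hr0L (ne_of_lt (h hL))
    · exact absurd hr0L (ne_of_gt (h hL))
  constructor
  · intro s
    rw [hre_eq s, hcos, mul_zero]
  · intro s u
    have hconst : ∀ x y : ℝ, Complex.normSq (z x) = Complex.normSq (z y) := by
      apply is_const_of_deriv_eq_zero
      · exact fun x => (hr x).differentiableAt
      · intro x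
        rw [(hr x).deriv, hcos]
        ring
    rw [Complex.norm_def, Complex.norm_def, hconst s u]
end

section
/- Suppose the cubic t³ − (g₂/4)t + g₃/4 = 0 with complex coefficients g₂, g₃ has three distinct roots e₁, e₂, e₃ (so e₁+e₂+e₃ = 0), and |e_i| = |e_j| for some i ≠ j. Then g₂³ and g₃² lie on the same real line through the origin in ℂ; consequently the quantity j = 1728·g₂³/(g₂³ − 27g₃²) is a real number. -/
open Complex

lemma key8 (g₂ g₃ a b c : ℂ)
    (hsum : a + b + c = 0)
    (hp2 : a*b + a*c + b*c = -g₂/4)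
    (hp3 : a*b*c = -g₃/4)
    (hne : a ≠ b)
    (hab : ‖a‖ = ‖b‖) :
    ((∃ t : ℝ, g₃^2 = (t : ℂ) * g₂^3) ∨ (∃ t : ℝ, g₂^3 = (t : ℂ) * g₃^2)) ∧
    (1728 * g₂^3 / (g₂^3 - 27*g₃^2)).im = 0 := by
  have ha : a ≠ 0 := by
    intro h
    apply hne
    have : ‖b‖ = 0 := by rw [← hab, h, norm_zero]
    rw [h, norm_eq_zero.mp this]
  have hb : b ≠ 0 := by
    intro h
    apply hne
    have : ‖a‖ = 0 := by rw [hab, h, norm_zero]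
    rw [h, norm_eq_zero.mp this]
  obtain ⟨l, hl⟩ := IsAlgClosed.exists_pow_nat_eq ((starRingEnd ℂ) b / a) (n := 2) (by norm_num)
  have habs1 : ‖l‖ = 1 := by
    have : ‖l‖ ^ 2 = 1 := by
      rw [← norm_pow, hl, norm_div, Complex.norm_conj, ← hab, div_self (by simpa using ha)]
    nlinarith [norm_nonneg l]
  have hl0 : l ≠ 0 := by
    intro h; rw [h] at habs1; simp at habs1
  have hmulconj : l * (starRingEnd ℂ) l = 1 := by
    rw [Complex.mul_conj, Complex.normSq_eq_norm_sq, habs1]; norm_num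
  -- conj (l*b) = l*a
  have hcb : (starRingEnd ℂ) (l * b) = l * a := by
    have : l ^ 2 * a = (starRingEnd ℂ) b := by
      rw [hl]; field_simp
    rw [map_mul]
    calc (starRingEnd ℂ) l * (starRingEnd ℂ) b = (starRingEnd ℂ) l * (l^2 * a) := by rw [this]
      _ = (l * (starRingEnd ℂ) l) * (l * a) := by ring
      _ = l * a := by rw [hmulconj, one_mul]
  have hca : (starRingEnd ℂ) (l * a) = l * b := by
    have := congrArg (starRingEnd ℂ) hcb
    simpa using this.symm
  have hcc : (starRingEnd ℂ) (l * c) = l * c := by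
    have hc : l * c = -(l*a + l*b) := by linear_combination l * hsum
    rw [hc, map_neg, map_add, hca, hcb]; ring
  have hneg4 : (starRingEnd ℂ) (-4) = (-4 : ℂ) := by rw [map_neg, map_ofNat]
  obtain ⟨p, hpdef⟩ : ∃ x : ℂ, x = l*a := ⟨_, rfl⟩
  obtain ⟨q, hqdef⟩ : ∃ x : ℂ, x = l*b := ⟨_, rfl⟩
  obtain ⟨r, hrdef⟩ : ∃ x : ℂ, x = l*c := ⟨_, rfl⟩
  rw [← hpdef, ← hqdef] at hca hcb
  rw [← hrdef] at hcc
  -- l² g₂ is real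
  have hS2 : (starRingEnd ℂ) (p*q + p*r + q*r) = p*q + p*r + q*r := by
    rw [map_add, map_add, map_mul, map_mul, map_mul, hca, hcb, hcc]; ring
  have hS3 : (starRingEnd ℂ) (p*q*r) = p*q*r := by
    rw [map_mul, map_mul, hca, hcb, hcc]; ring
  have hg2real : (starRingEnd ℂ) (l^2 * g₂) = l^2 * g₂ := by
    have h1 : l^2 * g₂ = -4 * (p*q + p*r + q*r) := by
      rw [hpdef, hqdef, hrdef]
      linear_combination (4 * l^2) * hp2
    rw [h1, map_mul, hneg4, hS2]
  have hg3real : (starRingEnd ℂ) (l^3 * g₃) = l^3 * g₃ := by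
    have h1 : l^3 * g₃ = -4 * (p*q*r) := by
      rw [hpdef, hqdef, hrdef]
      linear_combination (4 * l^3) * hp3
    rw [h1, map_mul, hneg4, hS3]
  obtain ⟨x, hx⟩ : ∃ x : ℝ, l^2 * g₂ = (x : ℂ) := ⟨_, (Complex.conj_eq_iff_re.mp hg2real).symm⟩
  obtain ⟨y, hy⟩ : ∃ y : ℝ, l^3 * g₃ = (y : ℂ) := ⟨_, (Complex.conj_eq_iff_re.mp hg3real).symm⟩
  set w : ℂ := l^6 with hw
  have hw0 : w ≠ 0 := pow_ne_zero _ hl0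
  have hA : w * g₂^3 = ((x^3 : ℝ) : ℂ) := by
    push_cast
    calc w * g₂^3 = (l^2 * g₂)^3 := by rw [hw]; ring
      _ = ((x:ℂ))^3 := by rw [hx]
  have hB : w * g₃^2 = ((y^2 : ℝ) : ℂ) := by
    push_cast
    calc w * g₃^2 = (l^3 * g₃)^2 := by rw [hw]; ring
      _ = ((y:ℂ))^2 := by rw [hy]
  set A : ℝ := x^3
  set B : ℝ := y^2
  have hg2c : g₂^3 = (A : ℂ) / w := by
    rw [eq_div_iff hw0]; linear_combination hA
  have hg3c : g₃^2 = (B : ℂ) / w := by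
    rw [eq_div_iff hw0]; linear_combination hB
  constructor
  · by_cases hA0 : (A : ℂ) = 0
    · right
      refine ⟨0, ?_⟩
      rw [hg2c, hA0]
      simp
    · left
      refine ⟨B / A, ?_⟩
      rw [hg2c, hg3c]
      push_cast
      field_simp
  · rw [hg2c, hg3c]
    have hrw : 1728 * ((A:ℂ)/w) / ((A:ℂ)/w - 27*((B:ℂ)/w))
        = ((1728*A : ℝ) : ℂ) / (((A - 27*B : ℝ)) : ℂ) := by
      push_cast
      rw [show (A:ℂ)/w - 27*((B:ℂ)/w) = ((A:ℂ) - 27*(B:ℂ))/w by ring,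
        show 1728 * ((A:ℂ)/w) = (1728 * (A:ℂ))/w by ring]
      rcases eq_or_ne ((A:ℂ) - 27*(B:ℂ)) 0 with h | h
      · rw [h]; simp
      · rw [div_div_div_cancel_right₀]
        exact hw0
    rw [hrw, ← Complex.ofReal_div]
    exact Complex.ofReal_im _

/-- If the cubic `t³ − (g₂/4)t + g₃/4` has three distinct roots
`e₁, e₂, e₃` (Vieta: `e₁+e₂+e₃ = 0`, `e₁e₂+e₁e₃+e₂e₃ = −g₂/4`, `e₁e₂e₃ = −g₃/4`)
and `|eᵢ| = |eⱼ|` for some `i ≠ j`, then `g₂³` and `g₃²` lie on the same real line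
through the origin, and `j = 1728·g₂³/(g₂³ − 27g₃²)` is real. -/
theorem stmt8 (g₂ g₃ e₁ e₂ e₃ : ℂ)
    (hsum : e₁ + e₂ + e₃ = 0)
    (hprod2 : e₁*e₂ + e₁*e₃ + e₂*e₃ = -g₂/4)
    (hprod3 : e₁*e₂*e₃ = -g₃/4)
    (h12 : e₁ ≠ e₂) (h13 : e₁ ≠ e₃) (h23 : e₂ ≠ e₃)
    (habs : ‖e₁‖ = ‖e₂‖ ∨ ‖e₁‖ = ‖e₃‖ ∨
      ‖e₂‖ = ‖e₃‖) :
    ((∃ t : ℝ, g₃^2 = (t : ℂ) * g₂^3) ∨ (∃ t : ℝ, g₂^3 = (t : ℂ) * g₃^2)) ∧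
    (1728 * g₂^3 / (g₂^3 - 27*g₃^2)).im = 0 := by
  rcases habs with h | h | h
  · exact key8 g₂ g₃ e₁ e₂ e₃ hsum hprod2 hprod3 h12 h
  · exact key8 g₂ g₃ e₁ e₃ e₂ (by linear_combination hsum)
      (by linear_combination hprod2) (by linear_combination hprod3) h13 h
  · exact key8 g₂ g₃ e₂ e₃ e₁ (by linear_combination hsum)
      (by linear_combination hprod2) (by linear_combination hprod3) h23 h
end

section
/- Let A, B, C be complex numbers with B ≠ 0, C ≠ 0, B ≠ C, and let s > 0 be a real parameter (playing the role of Im τ/π). Consider the 4×3 complex matrix M with rows (conj(A), A+C, B−C), (conj(A)+conj(B), −C, A+C), (s·conj(A)−1, 1, 0), (s·(conj(A)+conj(B))−1, 0, 1). Then rank M ≥ 2, and rank M = 2 if and only if |B|² = C·conj(B) + conj(C)·B and A + conj(A) + conj(B) = s·(|A|² + A·conj(B) + C·conj(B)). -/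
open Submodule Module Matrix

lemma range_two {α : Type*} (x y : α) : Set.range ![x, y] = {x, y} := by
  ext z
  constructor
  · rintro ⟨i, rfl⟩; fin_cases i <;> simp
  · rintro (rfl | rfl)
    exacts [⟨0, rfl⟩, ⟨1, rfl⟩]

lemma range_three {α : Type*} (x y z : α) : Set.range ![x, y, z] = {x, y, z} := by
  ext w
  constructor
  · rintro ⟨i, rfl⟩; fin_cases i <;> simp
  · rintro (rfl | rfl | rfl)
    exacts [⟨0, rfl⟩, ⟨1, rfl⟩, ⟨2, rfl⟩]

/-- For `B ≠ 0`, `C ≠ 0`, `B ≠ C` and `s > 0`, the 4×3 matrix with rows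
`(conj A, A+C, B−C)`, `(conj A + conj B, −C, A+C)`, `(s·conj A − 1, 1, 0)`,
`(s·(conj A + conj B) − 1, 0, 1)` has rank ≥ 2, with rank = 2 iff
`|B|² = C·conj B + conj C·B` and `A + conj A + conj B = s(|A|² + A·conj B + C·conj B)`. -/
theorem stmt10 (A B C : ℂ) (s : ℝ) (hB : B ≠ 0) (hC : C ≠ 0) (hBC : B ≠ C) (hs : 0 < s)
    (M : Matrix (Fin 4) (Fin 3) ℂ)
    (hM : M = !![starRingEnd ℂ A, A + C, B - C;
                 starRingEnd ℂ A + starRingEnd ℂ B, -C, A + C;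
                 (s : ℂ) * starRingEnd ℂ A - 1, 1, 0;
                 (s : ℂ) * (starRingEnd ℂ A + starRingEnd ℂ B) - 1, 0, 1]) :
    2 ≤ M.rank ∧
    (M.rank = 2 ↔
      ((Complex.normSq B : ℂ) = C * starRingEnd ℂ B + starRingEnd ℂ C * B ∧
       A + starRingEnd ℂ A + starRingEnd ℂ B
         = (s : ℂ) * ((Complex.normSq A : ℂ) + A * starRingEnd ℂ B + C * starRingEnd ℂ B))) := by
  have hs' : (s : ℂ) ≠ 0 := by exact_mod_cast hs.ne'
  set v0 : Fin 4 → ℂ := ![starRingEnd ℂ A, starRingEnd ℂ A + starRingEnd ℂ B,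
    (s:ℂ) * starRingEnd ℂ A - 1, (s:ℂ) * (starRingEnd ℂ A + starRingEnd ℂ B) - 1] with hv0
  set v1 : Fin 4 → ℂ := ![A + C, -C, 1, 0] with hv1
  set v2 : Fin 4 → ℂ := ![B - C, A + C, 0, 1] with hv2
  have h0 : Mᵀ = ![v0, v1, v2] := by
    subst hM; funext i j; fin_cases i <;> fin_cases j <;> rfl
  have hT : Set.range Mᵀ = {v0, v1, v2} := by rw [h0, range_three]
  have hrank : M.rank = finrank ℂ (span ℂ ({v0, v1, v2} : Set (Fin 4 → ℂ))) := by
    rw [Matrix.rank_eq_finrank_span_cols, Matrix.col, hT]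
  have hindep : LinearIndependent ℂ ![v1, v2] := by
    rw [LinearIndependent.pair_iff]
    intro p q h
    have h2 := congrFun h 2
    have h3 := congrFun h 3
    simp [hv1, hv2] at h2 h3
    exact ⟨h2, h3⟩
  have hcard : finrank ℂ (span ℂ ({v1, v2} : Set (Fin 4 → ℂ))) = 2 := by
    have := finrank_span_eq_card hindep
    rwa [range_two, Fintype.card_fin] at this
  have hle : span ℂ ({v1, v2} : Set (Fin 4 → ℂ)) ≤ span ℂ ({v0, v1, v2} : Set (Fin 4 → ℂ)) :=
    span_mono (by intro x hx; exact Set.mem_insert_iff.mpr (Or.inr hx))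
  have hlow : 2 ≤ M.rank := by
    rw [hrank, ← hcard]
    exact Submodule.finrank_mono hle
  refine ⟨hlow, ?_⟩
  -- rank = 2 ↔ v0 ∈ span {v1, v2}
  have hstep : M.rank = 2 ↔ v0 ∈ span ℂ ({v1, v2} : Set (Fin 4 → ℂ)) := by
    constructor
    · intro hr
      have heq : span ℂ ({v1, v2} : Set (Fin 4 → ℂ)) = span ℂ ({v0, v1, v2} : Set (Fin 4 → ℂ)) :=
        Submodule.eq_of_le_of_finrank_eq hle (by rw [hcard, ← hrank, hr])
      rw [heq]
      exact subset_span (Set.mem_insert _ _)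
    · intro hv
      have hge : span ℂ ({v0, v1, v2} : Set (Fin 4 → ℂ)) ≤ span ℂ ({v1, v2} : Set (Fin 4 → ℂ)) := by
        rw [span_le]
        rintro x (rfl | hx)
        · exact hv
        · exact subset_span hx
      rw [hrank, le_antisymm hge hle, hcard]
  rw [hstep, Submodule.mem_span_pair]
  -- Now the algebra
  constructor
  · rintro ⟨p, q, h⟩
    have h0' := congrFun h 0
    have h1' := congrFun h 1
    have h2' := congrFun h 2
    have h3' := congrFun h 3
    simp [hv0, hv1, hv2] at h0' h1' h2' h3'
    subst h2' h3'
    have hconj := congrArg (starRingEnd ℂ) h1'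
    simp only [map_add, _root_.map_mul, map_sub, map_neg, _root_.map_one, Complex.conj_conj,
      Complex.conj_ofReal] at hconj h0' h1' ⊢
    constructor
    · have key : (s:ℂ) * ((Complex.normSq B : ℂ) - (C * starRingEnd ℂ B + starRingEnd ℂ C * B)) = 0 := by
        rw [← Complex.mul_conj]
        linear_combination h0' - hconj
      rcases mul_eq_zero.mp key with h | h
      · exact absurd h hs'
      · exact sub_eq_zero.mp h
    · rw [← Complex.mul_conj]
      linear_combination -h1'
  · rintro ⟨hcond1, hcond2⟩
    rw [← Complex.mul_conj] at hcond1 hcond2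
    refine ⟨(s:ℂ) * starRingEnd ℂ A - 1, (s:ℂ) * (starRingEnd ℂ A + starRingEnd ℂ B) - 1, ?_⟩
    have hconj2 := congrArg (starRingEnd ℂ) hcond2
    simp only [map_add, _root_.map_mul, Complex.conj_conj, Complex.conj_ofReal] at hconj2
    funext i
    fin_cases i
    · simp [hv0, hv1, hv2]
      linear_combination (s:ℂ) * hcond1 - hconj2
    · simp [hv0, hv1, hv2]
      linear_combination -hcond2
    · simp [hv0, hv1, hv2]
    · simp [hv0, hv1, hv2]
end

section
/- For every integer g ≥ 2, the polynomial identity (a₀a₁+b₀b₁)(z+1)(z−1) + αa₁(z+1) + β(a₀+b₀)z(z+1)(z−1) + γb₁(z−1) + αβz(z+1) + βγz(z−1) = 0 for all z ∈ ℂ, with α, β, γ nonzero complex numbers, holds if and only if a₀ = −b₀ = (α+γ)/2 and a₁ = −b₁ = −β. -/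
/-- For every integer `g ≥ 2` and nonzero `α, β, γ`, the identity
`(a₀a₁+b₀b₁)(z+1)(z−1) + αa₁(z+1) + β(a₀+b₀)z(z+1)(z−1) + γb₁(z−1) + αβz(z+1) + βγz(z−1) = 0`
for all `z ∈ ℂ` holds iff `a₀ = −b₀ = (α+γ)/2` and `a₁ = −b₁ = −β`. -/
theorem stmt12 (g : ℕ) (hg : 2 ≤ g) (α β γ a₀ a₁ b₀ b₁ : ℂ)
    (hα : α ≠ 0) (hβ : β ≠ 0) (hγ : γ ≠ 0) :
    (∀ z : ℂ, (a₀*a₁ + b₀*b₁)*(z+1)*(z-1) + α*a₁*(z+1) + β*(a₀+b₀)*z*(z+1)*(z-1)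
        + γ*b₁*(z-1) + α*β*z*(z+1) + β*γ*z*(z-1) = 0) ↔
      (a₀ = (α+γ)/2 ∧ b₀ = -((α+γ)/2) ∧ a₁ = -β ∧ b₁ = β) := by
  constructor
  · intro h
    have h0 := h 0
    have h1 := h 1
    have h2 := h (-1)
    have h3 := h 2
    have ea1 : a₁ = -β := by
      have hz : α * (a₁ + β) = 0 := by linear_combination (1/2) * h1
      have := (mul_eq_zero.mp hz).resolve_left hα
      linear_combination this
    have eb1 : b₁ = β := by
      have hz : γ * (b₁ - β) = 0 := by linear_combination (-1/2) * h2
      have := (mul_eq_zero.mp hz).resolve_left hγ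
      linear_combination this
    rw [ea1, eb1] at h0 h3
    have eb0 : b₀ = -((α+γ)/2) := by
      have hz : β * (4*b₀ + 2*(α+γ)) = 0 := by linear_combination (1/3) * h3 - h0
      have := (mul_eq_zero.mp hz).resolve_left hβ
      linear_combination (1/4) * this
    have ea0 : a₀ = (α+γ)/2 := by
      have hz : β * (a₀ - b₀ - α - γ) = 0 := by linear_combination h0
      have := (mul_eq_zero.mp hz).resolve_left hβ
      rw [eb0] at this
      linear_combination this
    exact ⟨ea0, eb0, ea1, eb1⟩
  · rintro ⟨ha₀, hb₀, ha₁, hb₁⟩ z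
    subst ha₀ hb₀ ha₁ hb₁
    ring
end

section
/- The polynomial identity α(h₁₀+h₁₁z)(z+1) + γ(h₃₀+h₃₁z)(z−1) + β(h₁₀+h₁₁z+h₃₀+h₃₁z)(z+1)(z−1) = 0 for all z ∈ ℂ, with α, β, γ nonzero complex numbers, holds if and only if h₁₀ = −h₁₁ = h₃₀ = h₃₁ and h₁₀(2β − α + γ) = 0. -/
/-- For nonzero `α, β, γ`, the identity
`α(h₁₀+h₁₁z)(z+1) + γ(h₃₀+h₃₁z)(z−1) + β(h₁₀+h₁₁z+h₃₀+h₃₁z)(z+1)(z−1) = 0` for all `z ∈ ℂ`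
holds iff `h₁₀ = −h₁₁ = h₃₀ = h₃₁` and `h₁₀(2β − α + γ) = 0`. -/
theorem stmt13 (α β γ h₁₀ h₁₁ h₃₀ h₃₁ : ℂ) (hα : α ≠ 0) (hβ : β ≠ 0) (hγ : γ ≠ 0) :
    (∀ z : ℂ, α*(h₁₀ + h₁₁*z)*(z+1) + γ*(h₃₀ + h₃₁*z)*(z-1)
        + β*(h₁₀ + h₁₁*z + h₃₀ + h₃₁*z)*(z+1)*(z-1) = 0) ↔
      (h₁₁ = -h₁₀ ∧ h₃₀ = h₁₀ ∧ h₃₁ = h₁₀ ∧ h₁₀ * (2*β - α + γ) = 0) := by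
  constructor
  · intro h
    have e1 : α * (h₁₀ + h₁₁) = 0 := by linear_combination (h 1) / 2
    have e2 : γ * (h₃₀ - h₃₁) = 0 := by linear_combination (h (-1)) / (-2)
    have a1 : h₁₁ = -h₁₀ := by
      have := (mul_eq_zero.mp e1).resolve_left hα
      linear_combination this
    have a2 : h₃₁ = h₃₀ := by
      have := (mul_eq_zero.mp e2).resolve_left hγ
      linear_combination -this
    have e3 : α * h₁₀ - γ * h₃₀ - β * (h₁₀ + h₃₀) = 0 := by linear_combination h 0
    have e4 : -α * h₁₀ + γ * h₃₀ + β * (3 * h₃₀ - h₁₀) = 0 := by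
      linear_combination (h 2) / 3 - 2 * (α + β) * a1 - (2 * γ / 3 + 2 * β) * a2
    have e5 : β * (h₃₀ - h₁₀) = 0 := by linear_combination (e3 + e4) / 2
    have a3 : h₃₀ = h₁₀ := by
      have := (mul_eq_zero.mp e5).resolve_left hβ
      linear_combination this
    refine ⟨a1, a3, a2.trans a3, ?_⟩
    linear_combination -e3 - (β + γ) * a3
  · rintro ⟨a1, a2, a3, a4⟩ z
    subst a1 a2 a3
    linear_combination (z ^ 2 - 1) * a4
end

section
/- For every integer g ≥ 2 there are no complex numbers a₀, a₁, b₀, b₁ and nonzero complex numbers α, β, γ such that (a₀a₁+b₀b₁)(z+1)(z−1) + αa₁(z+1) + β(a₁+b₁)(z+1)(z−1)² + γb₀z(z−1) + βγz(z−1)² = 0 for all z ∈ ℂ. -/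
/-- For every integer `g ≥ 2` there are no complex `a₀, a₁, b₀, b₁` and
nonzero `α, β, γ` with `(a₀a₁+b₀b₁)(z+1)(z−1) + αa₁(z+1) + β(a₁+b₁)(z+1)(z−1)² +
γb₀z(z−1) + βγz(z−1)² = 0` for all `z ∈ ℂ`. -/
theorem stmt14 (g : ℕ) (hg : 2 ≤ g) :
    ¬ ∃ (a₀ a₁ b₀ b₁ α β γ : ℂ), α ≠ 0 ∧ β ≠ 0 ∧ γ ≠ 0 ∧
      ∀ z : ℂ, (a₀*a₁ + b₀*b₁)*(z+1)*(z-1) + α*a₁*(z+1)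
        + β*(a₁+b₁)*(z+1)*(z-1)^2 + γ*b₀*z*(z-1) + β*γ*z*(z-1)^2 = 0 := by
  rintro ⟨a₀, a₁, b₀, b₁, α, β, γ, hα, hβ, hγ, h⟩
  have h1 := h 1
  have h2 := h (-1)
  have h3 := h 0
  have h4 := h 2
  ring_nf at h1 h2 h3 h4
  -- from h1 : 2 α a₁ = 0 get a₁ = 0
  have ha₁ : a₁ = 0 := by
    have : α * a₁ = 0 := by linear_combination h1 / 2
    rcases mul_eq_zero.mp this with h' | h'
    · exact absurd h' hα
    · exact h'
  subst ha₁
  have hb₀ : b₀ = 2 * β := by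
    have : γ * (b₀ - 2 * β) = 0 := by linear_combination h2 / 2
    rcases mul_eq_zero.mp this with h' | h'
    · exact absurd h' hγ
    · linear_combination h'
  subst hb₀
  have hb₁ : b₁ = 0 := by
    have : β * b₁ = 0 := by linear_combination -h3
    rcases mul_eq_zero.mp this with h' | h'
    · exact absurd h' hβ
    · exact h'
  subst hb₁
  have : β * γ = 0 := by linear_combination h4 / 6
  rcases mul_eq_zero.mp this with h' | h'
  · exact hβ h'
  · exact hγ h'
end

section
/- There are no complex numbers a₀, a₁, b₀, b₁ and nonzero complex numbers α, β, γ such that (a₀a₁+b₀b₁)(z+1)(z−1) + αa₁(z+1) + β(a₀+b₀)(z+1)²(z−1) + γb₀(z−1) + αβ(z+1)² = 0 for all z ∈ ℂ. -/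
/-- There are no complex `a₀, a₁, b₀, b₁` and nonzero `α, β, γ` with
`(a₀a₁+b₀b₁)(z+1)(z−1) + αa₁(z+1) + β(a₀+b₀)(z+1)²(z−1) + γb₀(z−1) + αβ(z+1)² = 0`
for all `z ∈ ℂ`. -/
theorem stmt15 :
    ¬ ∃ (a₀ a₁ b₀ b₁ α β γ : ℂ), α ≠ 0 ∧ β ≠ 0 ∧ γ ≠ 0 ∧
      ∀ z : ℂ, (a₀*a₁ + b₀*b₁)*(z+1)*(z-1) + α*a₁*(z+1)
        + β*(a₀+b₀)*(z+1)^2*(z-1) + γ*b₀*(z-1) + α*β*(z+1)^2 = 0 := by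
  rintro ⟨a₀, a₁, b₀, b₁, α, β, γ, hα, hβ, hγ, h⟩
  have hm1 := h (-1)
  have hb₀ : b₀ = 0 := by
    have hgb : γ * b₀ = 0 := by linear_combination (-1/2 : ℂ) * hm1
    rcases mul_eq_zero.mp hgb with h' | h'
    · exact absurd h' hγ
    · exact h'
  subst hb₀
  have h1 := h 1
  have h0 := h 0
  have hm2 := h (-2)
  have ha₀ : a₀ = 0 := by
    have hba : β * a₀ = 0 := by
      linear_combination (-1/6 : ℂ) * hm2 + (-1/2 : ℂ) * h0 + (1/6 : ℂ) * h1
    rcases mul_eq_zero.mp hba with h' | h'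
    · exact absurd h' hβ
    · exact h'
  subst ha₀
  have hab : α * β = 0 := by
    linear_combination (1/2 : ℂ) * h1 - h0
  rcases mul_eq_zero.mp hab with h' | h'
  · exact hα h'
  · exact hβ h'
end
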